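/- arXiv:0911.4444 — 3 statements merged into one kernel-verified Lean document; each statement's English description precedes it below -/
import Mathlib

section
/- Let μ, σ² > 0, b = 16σ²/(9μ), and a ≥ b. Then (μb/(μb+σ²))^(1/2) · ( (1 + σ²/(μ(2a−b)))^(1/2) − 1 ) ≥ 1/(5(1 + μa/σ²)). -/
/- With `μ b = 16σ²/9` the prefactor is exactly `√(16/25) = 4/5`. Concavity of the square root
gives `√(1 + x) - 1 = x / (√(1 + x) + 1) ≥ 2x / (4 + x)`, and for `x = σ² / (μ (2a - b))` the
bound `(4/5) · 2x / (4 + x)` simplifies to `8σ² / (5 (8μa - 55σ²/9))`, which already dominates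
`σ² / (5 (σ² + μa))`. -/

theorem Real.two_mul_div_four_add_le_sqrt_one_add_sub_one {x : ℝ} (hx : 0 ≤ x) :
    2 * x / (4 + x) ≤ √(1 + x) - 1 := by
  have hsq : √(1 + x) ^ 2 = 1 + x := Real.sq_sqrt (by linarith)
  have hone : 1 ≤ √(1 + x) := Real.one_le_sqrt.mpr (by linarith)
  have hconc : √(1 + x) ≤ 1 + x / 2 := by nlinarith
  rw [div_le_iff₀ (by linarith)]
  nlinarith

theorem stmt_8 (μ σ2 : ℝ) (hμ : 0 < μ) (hσ : 0 < σ2) (b : ℝ) (hb : b = 16 * σ2 / (9 * μ))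
    (a : ℝ) (ha : b ≤ a) :
    Real.sqrt (μ * b / (μ * b + σ2)) * (Real.sqrt (1 + σ2 / (μ * (2 * a - b))) - 1) ≥
      1 / (5 * (1 + μ * a / σ2)) := by
  have hμb : μ * b = 16 * σ2 / 9 := by rw [hb]; field_simp
  have hprefactor : √(μ * b / (μ * b + σ2)) = 4 / 5 := by
    rw [hμb, show 16 * σ2 / 9 / (16 * σ2 / 9 + σ2) = (4 / 5) ^ 2 by field_simp; ring]
    exact Real.sqrt_sq (by norm_num)
  have hb0 : 0 < b := by rw [hb]; positivity
  have ha0 : 0 < a := hb0.trans_le ha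
  have h2ab : 0 < 2 * a - b := by linarith
  have hD : 0 < μ * (2 * a - b) := mul_pos hμ h2ab
  set x := σ2 / (μ * (2 * a - b)) with hx
  rw [hprefactor, ge_iff_le]
  have hleft : 1 / (5 * (1 + μ * a / σ2)) = σ2 / (5 * (σ2 + μ * a)) := by field_simp
  have hright : 4 / 5 * (2 * x / (4 + x)) = 8 * σ2 / (5 * (4 * (μ * (2 * a - b)) + σ2)) := by
    rw [hx]; field_simp; ring
  calc 1 / (5 * (1 + μ * a / σ2)) ≤ 4 / 5 * (2 * x / (4 + x)) := by
        rw [hleft, hright, div_le_div_iff₀ (by positivity) (by linarith)]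
        nlinarith
    _ ≤ 4 / 5 * (√(1 + x) - 1) := by
        gcongr
        exact Real.two_mul_div_four_add_le_sqrt_one_add_sub_one (by positivity)
end

section
/- Let (Sₖ)ₖ≥0 be an adapted real-valued process with S₀ = 0, and γ ≥ 0, such that the process Mₖ = Sₖ + γ·Σ_{j=1}^{k} (S_j − S_{j−1})² is a supermartingale. Then for every a > 0, P{ sup_k Sₖ ≥ a } ≤ 1/(1 + γa). -/
/-!
The shape of the bound comes from `V(y) = 1 / (1 + γ (a - y))` for `y < a` (and `V = 1` from `a`
on): for `x < a` one has `V(x + u) ≤ V(x) + V'(x) (u + γ u²)`, and `u + γ u²` is exactly the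
increment of the supermartingale `M = S + γ Σ U²`. Hence `V` along `S`, frozen once `a` is reached,
is at most `V(0) = 1 / (1 + γ a)` plus a transform of `M` by bounded nonnegative predictable
weights, whose expectation is nonpositive. This bounds the probability of reaching `a` by time `n`;
then let `n → ∞` and let the level increase to `a`.
-/

open MeasureTheory Finset Filter Topology

noncomputable section

variable {Ω : Type*} {m0 : MeasurableSpace Ω}

def sqCompensated (γ : ℝ) (S : ℕ → Ω → ℝ) (k : ℕ) (ω : Ω) : ℝ :=
  S k ω + γ * ∑ j ∈ Icc 1 k, (S j ω - S (j - 1) ω) ^ 2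

lemma sqCompensated_zero (γ : ℝ) (S : ℕ → Ω → ℝ) (ω : Ω) : sqCompensated γ S 0 ω = S 0 ω := by
  simp [sqCompensated]

lemma sqCompensated_succ_sub (γ : ℝ) (S : ℕ → Ω → ℝ) (k : ℕ) (ω : Ω) :
    sqCompensated γ S (k + 1) ω - sqCompensated γ S k ω
      = (S (k + 1) ω - S k ω) + γ * (S (k + 1) ω - S k ω) ^ 2 := by
  simp only [sqCompensated, sum_Icc_succ_top (Nat.le_add_left 1 k), Nat.add_sub_cancel]
  ring

lemma sqCompensated_congr {γ : ℝ} {S T : ℕ → Ω → ℝ} (h0 : ∀ ω, S 0 ω = T 0 ω)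
    (h : ∀ k ω, (S (k + 1) ω - S k ω) + γ * (S (k + 1) ω - S k ω) ^ 2
      = (T (k + 1) ω - T k ω) + γ * (T (k + 1) ω - T k ω) ^ 2) :
    sqCompensated γ S = sqCompensated γ T := by
  ext k ω
  induction k with
  | zero => simp only [sqCompensated_zero, h0]
  | succ k ih =>
    linarith [sqCompensated_succ_sub γ S k ω, sqCompensated_succ_sub γ T k ω, h k ω]

def largerRoot (γ d : ℝ) : ℝ := (-1 + √(1 + 4 * γ * d)) / (2 * γ)

lemma largerRoot_add_mul_sq {γ : ℝ} (hγ : 0 < γ) (u : ℝ) :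
    largerRoot γ (u + γ * u ^ 2) = max u (-γ⁻¹ - u) := by
  have hsq : 1 + 4 * γ * (u + γ * u ^ 2) = (1 + 2 * γ * u) ^ 2 := by ring
  rw [largerRoot, hsq, Real.sqrt_sq_eq_abs]
  rcases le_total 0 (1 + 2 * γ * u) with h | h
  · rw [abs_of_nonneg h, max_eq_left]
    · field_simp; ring
    · nlinarith [mul_inv_cancel₀ hγ.ne', inv_pos.2 hγ]
  · rw [abs_of_nonpos h, max_eq_right]
    · field_simp; ring
    · nlinarith [mul_inv_cancel₀ hγ.ne', inv_pos.2 hγ]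

lemma le_largerRoot {γ : ℝ} (hγ : 0 < γ) (u : ℝ) : u ≤ largerRoot γ (u + γ * u ^ 2) :=
  (largerRoot_add_mul_sq hγ u).ge.trans' (le_max_left _ _)

lemma largerRoot_add_mul_sq_eq {γ : ℝ} (hγ : 0 < γ) (u : ℝ) :
    largerRoot γ (u + γ * u ^ 2) + γ * largerRoot γ (u + γ * u ^ 2) ^ 2 = u + γ * u ^ 2 := by
  rw [largerRoot_add_mul_sq hγ]
  rcases max_choice u (-γ⁻¹ - u) with h | h <;> rw [h]
  field_simp; ring

/- Only `M` is adapted, not `S`: its increment `U + γ U²` determines `U` only up to the choice of a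
root. Always taking the larger root gives an adapted process above `S` with the same `M`. -/
def largerRootProcess (γ : ℝ) (M : ℕ → Ω → ℝ) (k : ℕ) (ω : Ω) : ℝ :=
  ∑ j ∈ range k, largerRoot γ (M (j + 1) ω - M j ω)

lemma largerRootProcess_succ_sub (γ : ℝ) (M : ℕ → Ω → ℝ) (k : ℕ) (ω : Ω) :
    largerRootProcess γ M (k + 1) ω - largerRootProcess γ M k ω
      = largerRoot γ (M (k + 1) ω - M k ω) := by
  simp only [largerRootProcess, sum_range_succ, add_sub_cancel_left]

lemma adapted_largerRootProcess {ℱ : Filtration ℕ m0} {M : ℕ → Ω → ℝ} (hM : Adapted ℱ M)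
    (γ : ℝ) : Adapted ℱ (largerRootProcess γ M) := fun k ↦ by
  refine Finset.measurable_sum _ fun j hj ↦ ?_
  have hjk : j < k := mem_range.1 hj
  have hΔ := (hM.measurable_le hjk).sub (hM.measurable_le (j.le_succ.trans hjk))
  exact (((hΔ.const_mul _).const_add 1).sqrt.const_add (-1)).div_const _

section LargerRootProcess

variable {γ : ℝ} {S : ℕ → Ω → ℝ}

lemma sqCompensated_largerRootProcess (hγ : 0 < γ) (hS0 : ∀ ω, S 0 ω = 0) :
    sqCompensated γ (largerRootProcess γ (sqCompensated γ S)) = sqCompensated γ S := by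
  refine sqCompensated_congr (fun ω ↦ by simp [largerRootProcess, hS0]) fun k ω ↦ ?_
  rw [largerRootProcess_succ_sub, sqCompensated_succ_sub, largerRoot_add_mul_sq_eq hγ]

lemma le_largerRootProcess (hγ : 0 < γ) (hS0 : ∀ ω, S 0 ω = 0) (k : ℕ) (ω : Ω) :
    S k ω ≤ largerRootProcess γ (sqCompensated γ S) k ω := by
  induction k with
  | zero => simp [largerRootProcess, hS0]
  | succ k ih =>
    have := largerRootProcess_succ_sub γ (sqCompensated γ S) k ω
    rw [sqCompensated_succ_sub] at this
    linarith [le_largerRoot hγ (S (k + 1) ω - S k ω)]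

end LargerRootProcess

def hitValue (γ a y : ℝ) : ℝ := if y < a then 1 / (1 + γ * (a - y)) else 1

section HitValue

variable {γ a : ℝ}

lemma hitValue_nonneg (hγ : 0 ≤ γ) (y : ℝ) : 0 ≤ hitValue γ a y := by
  unfold hitValue
  split_ifs with h
  · have : 0 < 1 + γ * (a - y) := by nlinarith
    positivity
  · exact zero_le_one

lemma hitValue_le_add (hγ : 0 ≤ γ) {x : ℝ} (hx : x < a) (y : ℝ) :
    hitValue γ a y ≤ hitValue γ a x + γ / (1 + γ * (a - x)) ^ 2 * ((y - x) + γ * (y - x) ^ 2) := by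
  set A := 1 + γ * (a - x)
  have hA : 1 ≤ A := by nlinarith
  have hA0 : 0 < A := by linarith
  rw [hitValue, hitValue, if_pos hx]
  split_ifs with hy
  · have hB : 0 < 1 + γ * (a - y) := by nlinarith
    have key : 1 / A + γ / A ^ 2 * ((y - x) + γ * (y - x) ^ 2) - 1 / (1 + γ * (a - y))
        = γ ^ 3 * (y - x) ^ 2 * (a - y) / (A ^ 2 * (1 + γ * (a - y))) := by
      field_simp
      ring
    have : 0 ≤ γ ^ 3 * (y - x) ^ 2 * (a - y) / (A ^ 2 * (1 + γ * (a - y))) := by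
      have : 0 ≤ a - y := by linarith
      positivity
    linarith
  · set t := γ * (y - x)
    have ht : A - 1 ≤ t := by simp only [A, t]; nlinarith
    have key : 1 / A + γ / A ^ 2 * ((y - x) + γ * (y - x) ^ 2) - 1
        = (t - (A - 1)) * (t + A) / A ^ 2 := by
      field_simp
      ring
    have : 0 ≤ (t - (A - 1)) * (t + A) / A ^ 2 := by
      have : 0 ≤ t - (A - 1) := by linarith
      have : 0 ≤ t + A := by linarith
      positivity
    linarith
end HitValue

def hitProcess (γ a : ℝ) (S : ℕ → Ω → ℝ) (k : ℕ) (ω : Ω) : ℝ :=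
  if ∃ j ≤ k, a ≤ S j ω then 1 else hitValue γ a (S k ω)

def hitWeight (γ a : ℝ) (S : ℕ → Ω → ℝ) (k : ℕ) (ω : Ω) : ℝ :=
  if ∃ j ≤ k, a ≤ S j ω then 0 else γ / (1 + γ * (a - S k ω)) ^ 2

section Hitting

variable {γ : ℝ} (a : ℝ) (S : ℕ → Ω → ℝ) {ℱ : Filtration ℕ m0}

lemma hitWeight_nonneg (hγ : 0 ≤ γ) (k : ℕ) (ω : Ω) : 0 ≤ hitWeight γ a S k ω := by
  unfold hitWeight
  split_ifs
  exacts [le_rfl, by positivity]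

lemma hitWeight_le (hγ : 0 ≤ γ) (k : ℕ) (ω : Ω) : hitWeight γ a S k ω ≤ γ := by
  unfold hitWeight
  split_ifs with h
  · exact hγ
  · have hk : S k ω < a := not_le.1 fun hk ↦ h ⟨k, le_rfl, hk⟩
    exact div_le_self hγ (one_le_pow₀ (by nlinarith))

lemma hitProcess_succ_le (hγ : 0 ≤ γ) (k : ℕ) (ω : Ω) :
    hitProcess γ a S (k + 1) ω ≤ hitProcess γ a S k ω
      + hitWeight γ a S k ω * (sqCompensated γ S (k + 1) ω - sqCompensated γ S k ω) := by
  rw [sqCompensated_succ_sub]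
  by_cases hit : ∃ j ≤ k, a ≤ S j ω
  · have hit' : ∃ j ≤ k + 1, a ≤ S j ω :=
      let ⟨j, hj, hja⟩ := hit; ⟨j, hj.trans k.le_succ, hja⟩
    simp [hitProcess, hitWeight, hit, hit']
  · have hk : S k ω < a := not_le.1 fun hk ↦ hit ⟨k, le_rfl, hk⟩
    have hnext : hitProcess γ a S (k + 1) ω = hitValue γ a (S (k + 1) ω) := by
      rw [hitProcess, ite_eq_right_iff]
      rintro ⟨j, hj, hja⟩
      rcases Nat.le_succ_iff.1 hj with hj | rfl
      · exact absurd ⟨j, hj, hja⟩ hit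
      · rw [hitValue, if_neg (not_lt.2 hja)]
    rw [hnext, hitProcess, hitWeight, if_neg hit, if_neg hit]
    exact hitValue_le_add hγ hk _

lemma hitProcess_le_add_sum (hγ : 0 ≤ γ) (n : ℕ) (ω : Ω) :
    hitProcess γ a S n ω ≤ hitProcess γ a S 0 ω + ∑ k ∈ range n,
      hitWeight γ a S k ω * (sqCompensated γ S (k + 1) ω - sqCompensated γ S k ω) := by
  induction n with
  | zero => simp
  | succ n ih => rw [sum_range_succ]; linarith [hitProcess_succ_le a S hγ n ω]

lemma hitProcess_zero (ha : 0 < a) {ω : Ω} (hS0 : S 0 ω = 0) :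
    hitProcess γ a S 0 ω = 1 / (1 + γ * a) := by
  simp [hitProcess, hitValue, hS0, ha, ha.not_ge]

lemma indicator_le_hitProcess (hγ : 0 ≤ γ) (n : ℕ) (ω : Ω) :
    {ω | ∃ j ≤ n, a ≤ S j ω}.indicator 1 ω ≤ hitProcess γ a S n ω := by
  by_cases hit : ∃ j ≤ n, a ≤ S j ω
  · simp [hitProcess, hit]
  · rw [Set.indicator_of_notMem (show ω ∉ {ω | ∃ j ≤ n, a ≤ S j ω} from hit), hitProcess,
      if_neg hit]
    exact hitValue_nonneg hγ _

lemma measurableSet_exists_le_le (hS : Adapted ℱ S) (n : ℕ) :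
    MeasurableSet[ℱ n] {ω | ∃ j ≤ n, a ≤ S j ω} := by
  have : {ω | ∃ j ≤ n, a ≤ S j ω} = ⋃ j ∈ Set.Iic n, {ω | a ≤ S j ω} := by ext; simp
  rw [this]
  exact .biUnion (Set.to_countable _) fun j hj ↦
    measurableSet_le measurable_const (hS.measurable_le hj)

lemma adapted_hitWeight (hS : Adapted ℱ S) : Adapted ℱ (hitWeight γ a S) :=
  fun k ↦ Measurable.ite (measurableSet_exists_le_le a S hS k) measurable_const
    (measurable_const.div (((((hS k).const_sub a).const_mul γ).const_add 1).pow_const 2))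

end Hitting

variable {γ a : ℝ} {S : ℕ → Ω → ℝ} {ℱ : Filtration ℕ m0} {P : Measure Ω} [IsProbabilityMeasure P]

lemma measure_exists_le_le_of_adapted (hS : Adapted ℱ S) (hS0 : ∀ ω, S 0 ω = 0) (hγ : 0 ≤ γ)
    (hM : Supermartingale (sqCompensated γ S) ℱ P) (ha : 0 < a) (n : ℕ) :
    P {ω | ∃ k ≤ n, a ≤ S k ω} ≤ ENNReal.ofReal (1 / (1 + γ * a)) := by
  set A := {ω | ∃ k ≤ n, a ≤ S k ω}
  set N := fun m ↦ ∑ k ∈ range m,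
    hitWeight γ a S k * ((-sqCompensated γ S) (k + 1) - (-sqCompensated γ S) k)
  have hN : Submartingale N ℱ P := hM.neg.sum_mul_sub (adapted_hitWeight a S hS).stronglyAdapted
    (hitWeight_le a S hγ) (hitWeight_nonneg a S hγ)
  have hA_le : ∀ ω, A.indicator 1 ω ≤ 1 / (1 + γ * a) - N n ω := fun ω ↦ by
    have := hitProcess_le_add_sum a S hγ n ω
    rw [hitProcess_zero a S ha (hS0 ω)] at this
    simpa [N, sub_eq_add_neg, ← sum_neg_distrib, mul_add, mul_neg, add_comm]
      using (indicator_le_hitProcess a S hγ n ω).trans this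
  have hN_nonneg : 0 ≤ ∫ ω, N n ω ∂P := by
    simpa [N] using hN.setIntegral_le n.zero_le MeasurableSet.univ
  have hA : MeasurableSet A := ℱ.le n _ (measurableSet_exists_le_le a S hS n)
  have hreal : P.real A ≤ 1 / (1 + γ * a) := calc
    P.real A = ∫ ω, A.indicator 1 ω ∂P := (integral_indicator_one hA).symm
    _ ≤ ∫ ω, (1 / (1 + γ * a) - N n ω) ∂P :=
      integral_mono ((integrable_const 1).indicator hA)
        ((integrable_const _).sub (hN.integrable n)) hA_le
    _ ≤ 1 / (1 + γ * a) := by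
      rw [integral_sub (integrable_const _) (hN.integrable n)]; simp [hN_nonneg]
  rw [← ENNReal.ofReal_toReal (measure_ne_top P A)]
  exact ENNReal.ofReal_le_ofReal hreal

lemma measure_exists_le_le (hS0 : ∀ ω, S 0 ω = 0) (hγ : 0 < γ)
    (hM : Supermartingale (sqCompensated γ S) ℱ P) (ha : 0 < a) :
    P {ω | ∃ k, a ≤ S k ω} ≤ ENNReal.ofReal (1 / (1 + γ * a)) := by
  set T := largerRootProcess γ (sqCompensated γ S)
  have hT0 : ∀ ω, T 0 ω = 0 := by simp [T, largerRootProcess]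
  have hT : Adapted ℱ T := adapted_largerRootProcess hM.stronglyAdapted.adapted γ
  have hMT : Supermartingale (sqCompensated γ T) ℱ P := by
    rwa [sqCompensated_largerRootProcess hγ hS0]
  have hmono : Monotone fun n ↦ {ω | ∃ k ≤ n, a ≤ T k ω} :=
    fun m n hmn ω ⟨k, hk, hak⟩ ↦ ⟨k, hk.trans hmn, hak⟩
  calc P {ω | ∃ k, a ≤ S k ω} ≤ P (⋃ n, {ω | ∃ k ≤ n, a ≤ T k ω}) :=
        measure_mono fun ω ⟨k, hk⟩ ↦
          Set.mem_iUnion.2 ⟨k, k, le_rfl, hk.trans (le_largerRootProcess hγ hS0 k ω)⟩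
    _ ≤ _ := by
      rw [hmono.measure_iUnion]
      exact iSup_le (measure_exists_le_le_of_adapted hT hT0 hγ.le hMT ha)

end

theorem stmt_10 {Ω : Type*} {m0 : MeasurableSpace Ω} (P : Measure Ω) [IsProbabilityMeasure P]
    (ℱ : Filtration ℕ m0) (S : ℕ → Ω → ℝ) (hS0 : ∀ ω, S 0 ω = 0) (γ : ℝ) (hγ : 0 ≤ γ)
    (hsuper : Supermartingale
      (fun k ω => S k ω + γ * ∑ j ∈ Finset.Icc 1 k, (S j ω - S (j - 1) ω) ^ 2) ℱ P) :
    ∀ a : ℝ, 0 < a →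
      P {ω | (a : EReal) ≤ ⨆ k, (S k ω : EReal)} ≤ ENNReal.ofReal (1 / (1 + γ * a)) := by
  intro a ha
  rcases hγ.eq_or_lt with rfl | hγ
  · simpa using prob_le_one
  have hcont : ContinuousAt (fun b : ℝ ↦ ENNReal.ofReal (1 / (1 + γ * b))) a :=
    ENNReal.continuous_ofReal.continuousAt.comp (by fun_prop (disch := positivity))
  refine ge_of_tendsto (hcont.tendsto.mono_left (nhdsWithin_le_nhds (s := Set.Iio a))) ?_
  filter_upwards [Ioo_mem_nhdsLT ha] with b ⟨hb, hba⟩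
  refine (measure_mono fun ω hω ↦ ?_).trans (measure_exists_le_le hS0 hγ hsuper hb)
  obtain ⟨k, hk⟩ := lt_iSup_iff.1 ((EReal.coe_lt_coe_iff.2 hba).trans_le hω)
  exact ⟨k, (EReal.coe_lt_coe_iff.1 hk).le⟩
end

section
/- Let γ ≥ 0 and a ≥ 0. If U is a random variable with a + U ≥ 0 a.s. and E[U − γU²] ≥ 0, then E[1/(1 + γ(a+U))] ≤ 1/(1+γa). -/
open MeasureTheory

theorem stmt_15 {Ω : Type*} [MeasurableSpace Ω] (P : Measure Ω) [IsProbabilityMeasure P]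
    (γ a : ℝ) (hγ : 0 ≤ γ) (ha : 0 ≤ a) (U : Ω → ℝ)
    (hU : Integrable U P) (hU2 : Integrable (fun ω => (U ω) ^ 2) P)
    (hnn : ∀ᵐ ω ∂P, 0 ≤ a + U ω)
    (hdrift : (∫ ω, U ω ∂P) ≥ γ * ∫ ω, (U ω) ^ 2 ∂P) :
    (∫ ω, 1 / (1 + γ * (a + U ω)) ∂P) ≤ 1 / (1 + γ * a) := by
  set c : ℝ := 1 + γ * a with hc_def
  have hc : 0 < c := by positivity
  have hc2 : 0 < c ^ 2 := by positivity
  have hiU : Integrable (fun ω => γ/c^2 * U ω) P := hU.const_mul _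
  have hiU2 : Integrable (fun ω => γ^2/c^2 * (U ω)^2) P := hU2.const_mul _
  have hi1 : Integrable (fun ω => 1/c - γ/c^2 * U ω) P := by
    exact (integrable_const (1/c)).sub hiU
  have hg : Integrable (fun ω => 1/c - γ/c^2 * U ω + γ^2/c^2 * (U ω)^2) P := by
    exact hi1.add hiU2
  have haem : AEMeasurable (fun ω => (1 + γ * (a + U ω))⁻¹) P :=
    (((hU.aemeasurable.const_add a).const_mul γ).const_add 1).inv
  have hf : Integrable (fun ω => 1 / (1 + γ * (a + U ω))) P := by
    simp only [one_div]
    apply Integrable.mono' (integrable_const (1:ℝ)) haem.aestronglyMeasurable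
    filter_upwards [hnn] with ω hω
    have h1 : (1:ℝ) ≤ 1 + γ * (a + U ω) := by nlinarith
    rw [Real.norm_eq_abs, abs_of_nonneg (by positivity)]
    rw [inv_le_one_iff₀]; right; exact h1
  have hle : ∀ᵐ ω ∂P, 1 / (1 + γ * (a + U ω)) ≤ 1/c - γ/c^2 * U ω + γ^2/c^2 * (U ω)^2 := by
    filter_upwards [hnn] with ω hω
    set u := U ω
    have h1 : (0:ℝ) < 1 + γ * (a + u) := by nlinarith
    rw [div_le_iff₀ h1]
    have expand : (1/c - γ/c^2 * u + γ^2/c^2 * u^2) * (1 + γ * (a + u)) * c^2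
        = c^2 + γ^3 * u^2 * (a + u) := by
      field_simp
      ring_nf
      rw [hc_def]; ring
    have key : c^2 ≤ (1/c - γ/c^2 * u + γ^2/c^2 * u^2) * (1 + γ * (a + u)) * c^2 := by
      rw [expand]
      nlinarith [mul_nonneg (mul_nonneg (pow_nonneg hγ 3) (sq_nonneg u)) hω]
    exact le_of_mul_le_mul_right (by rw [one_mul]; exact key) hc2
  calc (∫ ω, 1 / (1 + γ * (a + U ω)) ∂P)
      ≤ ∫ ω, (1/c - γ/c^2 * U ω + γ^2/c^2 * (U ω)^2) ∂P := integral_mono_ae hf hg hle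
    _ = 1/c - γ/c^2 * ∫ ω, U ω ∂P + γ^2/c^2 * ∫ ω, (U ω)^2 ∂P := by
        rw [integral_add hi1 hiU2, integral_sub (integrable_const _) hiU,
          integral_const, integral_const_mul, integral_const_mul]
        simp
    _ ≤ 1/c := by
        have h2 : γ/c^2 * (γ * ∫ ω, (U ω)^2 ∂P) ≤ γ/c^2 * ∫ ω, U ω ∂P :=
          mul_le_mul_of_nonneg_left hdrift (by positivity)
        have h3 : γ^2/c^2 * ∫ ω, (U ω)^2 ∂P = γ/c^2 * (γ * ∫ ω, (U ω)^2 ∂P) := by ring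
        linarith
end
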